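/- Let m ≥ 1 and i ≥ 2 be integers. Let (Ω, F, ℙ) be a probability space with a filtration (F_t)_{t≥i} and let (d_t)_{t≥i} be an adapted, nonnegative process with d_t ≤ 2mt almost surely, such that for all sufficiently large t, E[exp((d_{t+1} - d_t)/ln(t+1)) | F_t] ≤ exp(m·c_t·(e^{1/ln(t+1)} - 1)) almost surely, and such that there exist M > 0 and T₀ ≥ i with E[d_t] ≤ M·ln t for all t ≥ T₀. Let γ : ℕ → (0,∞) satisfy γ(t) → ∞ and (∑_{j=2}^{t} 1/(j·ln j)) / γ(t) → 0 as t → ∞. Then for every constant κ > 1, ℙ(d_t ≥ κ·γ(t)·ln t) → 0 as t → ∞; that is, d_t ≤ κ·γ(t)·ln t with high probability. -/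

import Mathlib

/-! Markov's inequality alone suffices:
`ℙ(d_t ≥ κ γ(t) ln t) ≤ E[d_t] / (κ γ(t) ln t) ≤ M / (κ γ(t))`, which tends to `0` as `γ(t) → ∞`. -/

open Filter MeasureTheory

/-- `c_l = (2ml+1)/(l(2ml+1-2m))`. -/
noncomputable def cPAAPA (m l : ℕ) : ℝ :=
  (2 * (m : ℝ) * l + 1) / ((l : ℝ) * (2 * (m : ℝ) * l + 1 - 2 * m))

open Topology

theorem tendsto_measure_ge_of_integral_le {ι Ω : Type*} {l : Filter ι} [MeasurableSpace Ω]
    {μ : Measure Ω} [IsFiniteMeasure μ] {X : ι → Ω → ℝ} {a b : ι → ℝ}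
    (hX_nonneg : ∀ᶠ t in l, 0 ≤ᵐ[μ] X t) (hX_int : ∀ᶠ t in l, Integrable (X t) μ)
    (hXa : ∀ᶠ t in l, ∫ ω, X t ω ∂μ ≤ a t) (hb : ∀ᶠ t in l, 0 < b t)
    (hab : Tendsto (fun t => a t / b t) l (𝓝 0)) :
    Tendsto (fun t => μ {ω | b t ≤ X t ω}) l (𝓝 0) := by
  have hmarkov : ∀ᶠ t in l, μ.real {ω | b t ≤ X t ω} ≤ a t / b t := by
    filter_upwards [hX_nonneg, hX_int, hXa, hb] with t h0 hint hle hbt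
    rw [le_div_iff₀ hbt, mul_comm]
    exact (mul_meas_ge_le_integral_of_nonneg h0 hint (b t)).trans hle
  have hreal : Tendsto (fun t => μ.real {ω | b t ≤ X t ω}) l (𝓝 0) :=
    tendsto_of_tendsto_of_tendsto_of_le_of_le' tendsto_const_nhds hab
      (Eventually.of_forall fun _ => measureReal_nonneg) hmarkov
  convert ENNReal.tendsto_ofReal hreal using 2
  · exact (ofReal_measureReal (measure_ne_top μ _)).symm
  · exact ENNReal.ofReal_zero.symm

theorem pa_apa_pure_anti_whp_bound_general
    {Ω : Type*} {m0 : MeasurableSpace Ω} (μ : Measure Ω) [IsProbabilityMeasure μ]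
    (ℱ : Filtration ℕ m0) (m i : ℕ)
    (d : ℕ → Ω → ℝ) (hadapted : Adapted ℱ d)
    (hnonneg : ∀ t, i ≤ t → 0 ≤ᵐ[μ] d t)
    (hbound : ∀ t, i ≤ t → ∀ᵐ ω ∂μ, d t ω ≤ 2 * (m : ℝ) * t)
    (M : ℝ) (T₀ : ℕ)
    (hEd : ∀ t, T₀ ≤ t → ∫ ω, d t ω ∂μ ≤ M * Real.log t)
    (γ : ℕ → ℝ)
    (hγ : Tendsto γ atTop atTop) :
    ∀ κ : ℝ, 1 < κ →
      Tendsto (fun t : ℕ => μ {ω | κ * γ t * Real.log t ≤ d t ω})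
        atTop (nhds 0) := by
  intro κ hκ
  have hκγ : Tendsto (fun t => κ * γ t) atTop atTop :=
    hγ.const_mul_atTop (zero_lt_one.trans hκ)
  have hlog : ∀ᶠ t : ℕ in atTop, 0 < Real.log t :=
    (eventually_ge_atTop 2).mono fun t ht => Real.log_pos (by exact_mod_cast ht)
  have hi : ∀ᶠ t in atTop, i ≤ t := eventually_ge_atTop i
  refine tendsto_measure_ge_of_integral_le (a := fun t : ℕ => M * Real.log t)
    (hi.mono hnonneg) ?_ (eventually_atTop.2 ⟨T₀, hEd⟩) ?_ ?_
  · filter_upwards [hi] with t ht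
    refine .of_bound ((hadapted t).mono (ℱ.le t) le_rfl).aestronglyMeasurable (2 * m * t) ?_
    filter_upwards [hnonneg t ht, hbound t ht] with ω h0 hle
    rwa [Real.norm_of_nonneg h0]
  · filter_upwards [hκγ.eventually_gt_atTop 0, hlog] with t hγt hlogt
    positivity
  · have hratio : Tendsto (fun t => M / (κ * γ t)) atTop (𝓝 0) := by
      simpa only [div_eq_mul_inv, Pi.inv_apply, mul_zero] using hκγ.inv_tendsto_atTop.const_mul M
    refine hratio.congr' ?_
    filter_upwards [hlog] with t hlogt
    rw [mul_div_mul_right _ _ hlogt.ne']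

/-- Theorem 3.12 of the paper: in the pure anti-preferential attachment model, if
`γ(t) → ∞` and `(∑_{j=2}^t 1/(j ln j))/γ(t) → 0`, then for every `κ > 1` the degree
process satisfies `d_t ≤ κ γ(t) ln t` with high probability as `t → ∞`. -/
theorem pa_apa_pure_anti_whp_bound
    {Ω : Type*} {m0 : MeasurableSpace Ω} (μ : Measure Ω) [IsProbabilityMeasure μ]
    (ℱ : Filtration ℕ m0) (m i : ℕ) (hm : 1 ≤ m) (hi : 2 ≤ i)
    (d : ℕ → Ω → ℝ) (hadapted : Adapted ℱ d)
    (hnonneg : ∀ t, i ≤ t → 0 ≤ᵐ[μ] d t)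
    (hbound : ∀ t, i ≤ t → ∀ᵐ ω ∂μ, d t ω ≤ 2 * (m : ℝ) * t)
    (hmgf : ∀ᶠ t : ℕ in atTop,
      μ[fun ω => Real.exp ((d (t + 1) ω - d t ω) / Real.log (t + 1)) | ℱ t] ≤ᵐ[μ]
        fun _ => Real.exp ((m : ℝ) * cPAAPA m t * (Real.exp (1 / Real.log (t + 1)) - 1)))
    (M : ℝ) (hM : 0 < M) (T₀ : ℕ) (hT₀ : i ≤ T₀)
    (hEd : ∀ t, T₀ ≤ t → ∫ ω, d t ω ∂μ ≤ M * Real.log t)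
    (γ : ℕ → ℝ) (hγpos : ∀ t, 0 < γ t)
    (hγ : Tendsto γ atTop atTop)
    (hγratio : Tendsto
      (fun t : ℕ => (∑ j ∈ Finset.Icc 2 t, 1 / ((j : ℝ) * Real.log j)) / γ t)
      atTop (nhds 0)) :
    ∀ κ : ℝ, 1 < κ →
      Tendsto (fun t : ℕ => μ {ω | κ * γ t * Real.log t ≤ d t ω})
        atTop (nhds 0) :=
  pa_apa_pure_anti_whp_bound_general μ ℱ m i d hadapted hnonneg hbound M T₀ hEd γ hγ
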